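/- Let $0 < \alpha \le 1$, $m \in (0,1)$, and $N \ge 1$. Define intervals $I_j = [2N^{-\alpha(1-m)} j, \, 2N^{-\alpha(1-m)} j + N^{-(1-m)}]$ for $j \in \mathbb{Z}$, let $\mathcal{J} = \{j : I_j \cap [-1,1] \neq \emptyset\}$, and set $\mu = c N^{(1-\alpha)(1-m)} \sum_{j \in \mathcal{J}} \chi_{I_j}(x)\, dx$. Then $\mu(B(x,r)) \lesssim r^\alpha$ for all $x \in [-1,1]$ and $r > 0$, so that for a suitable normalizing constant $c > 0$, $\mu$ is an $\alpha$-dimensional probability measure supported in $[-1,1]$. -/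

import Mathlib

open MeasureTheory Set
open scoped ENNReal

/-- The interval `I_j = [2N^{-α(1-m)}j, 2N^{-α(1-m)}j + N^{-(1-m)}]`. -/
noncomputable def Ij (α m N : ℝ) (j : ℤ) : Set ℝ :=
  Set.Icc (2 * N ^ (-(α * (1 - m))) * j) (2 * N ^ (-(α * (1 - m))) * j + N ^ (-(1 - m)))

/-- The index set `𝒥 = {j : I_j ∩ [-1,1] ≠ ∅}`. -/
noncomputable def JJ (α m N : ℝ) : Set ℤ := {j : ℤ | (Ij α m N j ∩ Set.Icc (-1 : ℝ) 1).Nonempty}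

/-- The measure `μ = N^{(1-α)(1-m)} ∑_{j ∈ 𝒥} χ_{I_j}(x) dx` (before normalization). -/
noncomputable def muN (α m N : ℝ) : Measure ℝ :=
  ENNReal.ofReal (N ^ ((1 - α) * (1 - m))) • (volume.restrict (⋃ j ∈ JJ α m N, Ij α m N j))

lemma card_Icc_cast_le {a b : ℝ} (hab : a ≤ b) :
    ((Finset.Icc ⌈a⌉ ⌊b⌋).card : ℝ) ≤ b - a + 1 := by
  rw [Int.card_Icc]
  rcases le_or_gt (⌈a⌉ : ℤ) (⌊b⌋ + 1) with h | h
  · have hk : (0:ℤ) ≤ ⌊b⌋ + 1 - ⌈a⌉ := by omega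
    have h0 : ((⌊b⌋ + 1 - ⌈a⌉).toNat : ℝ) = ((⌊b⌋ : ℝ) + 1 - (⌈a⌉ : ℝ)) := by
      rw [show ((⌊b⌋ + 1 - ⌈a⌉).toNat : ℝ) = (((⌊b⌋ + 1 - ⌈a⌉).toNat : ℤ) : ℝ) by push_cast; ring,
        Int.toNat_of_nonneg hk]
      push_cast; ring
    rw [h0]
    have h1 : (⌊b⌋ : ℝ) ≤ b := Int.floor_le b
    have h2 : a ≤ (⌈a⌉ : ℝ) := Int.le_ceil a
    linarith
  · rw [Int.toNat_of_nonpos (by omega)]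
    simp
    linarith

lemma Smeas (α m N : ℝ) : MeasurableSet (⋃ j ∈ JJ α m N, Ij α m N j) :=
  MeasurableSet.biUnion (Set.to_countable _) (fun _ _ => measurableSet_Icc)

example (α m : ℝ) (N : ℝ) (A : Set ℝ) (hA : MeasurableSet A) :
    muN α m N A = ENNReal.ofReal (N ^ ((1 - α) * (1 - m))) *
      volume (A ∩ ⋃ j ∈ JJ α m N, Ij α m N j) := by
  simp only [muN, Measure.smul_apply, Measure.restrict_apply hA, smul_eq_mul]

lemma muN_ball_le (α m : ℝ) (hα0 : 0 < α) (hα1 : α ≤ 1) (hm0 : 0 < m) (hm1 : m < 1)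
    (N : ℝ) (hN : 1 ≤ N) (x : ℝ) (hx : x ∈ Set.Icc (-1 : ℝ) 1) (r : ℝ) (hr : 0 < r) :
    muN α m N (Metric.ball x r) ≤ ENNReal.ofReal (5 * r ^ α) := by
  obtain ⟨hx1, hx2⟩ := hx
  have hN0 : (0:ℝ) < N := lt_of_lt_of_le one_pos hN
  set L : ℝ := N ^ (-(α * (1 - m))) with hLdef
  set ell : ℝ := N ^ (-(1 - m)) with helldef
  set w : ℝ := N ^ ((1 - α) * (1 - m)) with hwdef
  have hIj : ∀ j : ℤ, Ij α m N j = Set.Icc (2 * L * j) (2 * L * j + ell) := fun j => rfl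
  have hL : 0 < L := Real.rpow_pos_of_pos hN0 _
  have hL1 : L ≤ 1 := Real.rpow_le_one_of_one_le_of_nonpos hN (by nlinarith)
  have hell : 0 < ell := Real.rpow_pos_of_pos hN0 _
  have hell1 : ell ≤ 1 := Real.rpow_le_one_of_one_le_of_nonpos hN (by nlinarith)
  have hellL : ell ≤ L := Real.rpow_le_rpow_of_exponent_le hN (by nlinarith)
  have hw : 0 < w := Real.rpow_pos_of_pos hN0 _
  have hwell : w * ell = L := by
    rw [hwdef, helldef, hLdef, ← Real.rpow_add hN0]; congr 1; ring
  have hwp : w = ell ^ (α - 1) := by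
    rw [hwdef, helldef, ← Real.rpow_mul (le_of_lt hN0)]; congr 1; ring
  have hellα : ell ^ α = L := by
    rw [helldef, hLdef, ← Real.rpow_mul (le_of_lt hN0)]; congr 1; ring
  have hrα : 0 < r ^ α := Real.rpow_pos_of_pos hr _
  -- key pointwise estimate
  have hkey : w * min (2 * r) ell ≤ 2 * r ^ α := by
    have h2r : (0:ℝ) < 2 * r := by linarith
    have h2rα : (2 * r) ^ α = 2 ^ α * r ^ α := Real.mul_rpow (by norm_num) (le_of_lt hr)
    have h2α : (2:ℝ) ^ α ≤ 2 := by
      calc (2:ℝ) ^ α ≤ (2:ℝ) ^ (1:ℝ) := Real.rpow_le_rpow_of_exponent_le one_le_two hα1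
      _ = 2 := Real.rpow_one 2
    have hfin : (2 * r) ^ α ≤ 2 * r ^ α := by
      rw [h2rα]; exact mul_le_mul_of_nonneg_right h2α (le_of_lt hrα)
    rcases le_total (2 * r) ell with hc | hc
    · rw [min_eq_left hc, hwp]
      calc ell ^ (α - 1) * (2 * r) ≤ (2 * r) ^ (α - 1) * (2 * r) :=
            mul_le_mul_of_nonneg_right
              (Real.rpow_le_rpow_of_nonpos h2r hc (by linarith)) (le_of_lt h2r)
      _ = (2 * r) ^ α := by
            rw [← Real.rpow_add_one (ne_of_gt h2r)]; congr 1; ring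
      _ ≤ 2 * r ^ α := hfin
    · rw [min_eq_right hc]
      calc w * ell = ell ^ α := by rw [hwell, hellα]
      _ ≤ (2 * r) ^ α := Real.rpow_le_rpow (le_of_lt hell) hc (le_of_lt hα0)
      _ ≤ 2 * r ^ α := hfin
  -- measure formula
  have hμ : muN α m N (Metric.ball x r) =
      ENNReal.ofReal w * volume (Metric.ball x r ∩ ⋃ j ∈ JJ α m N, Ij α m N j) := by
    simp only [muN, Measure.smul_apply, Measure.restrict_apply measurableSet_ball,
      smul_eq_mul, ← hwdef]
  set a0 : ℝ := max (x - r - ell) (-2) with ha0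
  set b0 : ℝ := min (x + r) 1 with hb0
  have hab0 : a0 ≤ b0 := by
    apply max_le <;> apply le_min <;> linarith
  set a : ℝ := a0 / (2 * L) with ha
  set b : ℝ := b0 / (2 * L) with hb
  have hab : a ≤ b := div_le_div_of_nonneg_right hab0 (by positivity)
  set F : Finset ℤ := Finset.Icc ⌈a⌉ ⌊b⌋ with hF
  -- covering
  have hsub : Metric.ball x r ∩ (⋃ j ∈ JJ α m N, Ij α m N j) ⊆
      ⋃ j ∈ F, (Ij α m N j ∩ Metric.ball x r) := by
    rintro y ⟨hyb, hyS⟩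
    simp only [mem_iUnion, exists_prop] at hyS
    obtain ⟨j, hj, hyI⟩ := hyS
    obtain ⟨z, hz1, hz2⟩ := hj
    rw [hIj j] at hyI hz1
    obtain ⟨hy1, hy2⟩ := hyI
    obtain ⟨hz11, hz12⟩ := hz1
    obtain ⟨hz21, hz22⟩ := hz2
    rw [Real.ball_eq_Ioo] at hyb
    obtain ⟨hyb1, hyb2⟩ := hyb
    have hja : a ≤ (j : ℝ) := by
      rw [ha, div_le_iff₀ (by positivity)]
      calc a0 ≤ 2 * L * j := max_le (by linarith) (by linarith)
      _ = (j : ℝ) * (2 * L) := by ring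
    have hjb : (j : ℝ) ≤ b := by
      rw [hb, le_div_iff₀ (by positivity)]
      calc (j : ℝ) * (2 * L) = 2 * L * j := by ring
      _ ≤ b0 := le_min (by linarith) (by linarith)
    simp only [mem_iUnion, exists_prop]
    refine ⟨j, Finset.mem_Icc.mpr ⟨Int.ceil_le.mpr hja, Int.le_floor.mpr hjb⟩, ?_, ?_⟩
    · rw [hIj j]; exact ⟨hy1, hy2⟩
    · rw [Real.ball_eq_Ioo]; exact ⟨hyb1, hyb2⟩
  -- volume of each piece
  have hone : ∀ j : ℤ, volume (Ij α m N j ∩ Metric.ball x r) ≤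
      ENNReal.ofReal (min (2 * r) ell) := by
    intro j
    rcases le_total (2 * r) ell with hc | hc
    · rw [min_eq_left hc]
      refine le_trans (measure_mono inter_subset_right) ?_
      rw [Real.ball_eq_Ioo, Real.volume_Ioo]
      apply le_of_eq; congr 1; ring
    · rw [min_eq_right hc]
      refine le_trans (measure_mono inter_subset_left) ?_
      rw [hIj j, Real.volume_Icc]
      apply le_of_eq; congr 1; ring
  have hvol : volume (Metric.ball x r ∩ ⋃ j ∈ JJ α m N, Ij α m N j) ≤
      (F.card : ℝ≥0∞) * ENNReal.ofReal (min (2 * r) ell) := by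
    calc volume (Metric.ball x r ∩ ⋃ j ∈ JJ α m N, Ij α m N j)
        ≤ volume (⋃ j ∈ F, (Ij α m N j ∩ Metric.ball x r)) := measure_mono hsub
      _ ≤ ∑ j ∈ F, volume (Ij α m N j ∩ Metric.ball x r) := measure_biUnion_finset_le _ _
      _ ≤ ∑ _j ∈ F, ENNReal.ofReal (min (2 * r) ell) :=
          Finset.sum_le_sum (fun j _ => hone j)
      _ = (F.card : ℝ≥0∞) * ENNReal.ofReal (min (2 * r) ell) := by
          rw [Finset.sum_const, nsmul_eq_mul]
  -- the real-number estimate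
  have hcard : (F.card : ℝ) ≤ (b0 - a0) / (2 * L) + 1 := by
    have := card_Icc_cast_le hab
    rw [ha, hb, div_sub_div_same] at this
    exact this
  have hminpos : 0 ≤ min (2 * r) ell := le_min (by linarith) (le_of_lt hell)
  have hfin : (F.card : ℝ) * (w * min (2 * r) ell) ≤ 5 * r ^ α := by
    rcases le_or_gt r L with hrL | hrL
    · -- small r : at most 5/2 intervals, each contributing ≤ 2 r^α
      have hc52 : (F.card : ℝ) ≤ 5 / 2 := by
        have : (b0 - a0) / (2 * L) ≤ 3 / 2 := by
          rw [div_le_iff₀ (by positivity)]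
          have h1 : b0 - a0 ≤ 2 * r + ell := by
            have := le_max_left (x - r - ell) (-2)
            have := min_le_left (x + r) 1
            rw [hb0, ha0]; linarith [min_le_left (x + r) 1, le_max_left (x - r - ell) (-2)]
          nlinarith
        linarith
      calc (F.card : ℝ) * (w * min (2 * r) ell) ≤ (5 / 2) * (2 * r ^ α) := by
            apply mul_le_mul hc52 hkey (by positivity) (by norm_num)
      _ = 5 * r ^ α := by ring
    · -- large r : min = ell and w * ell = L
      have hmin : min (2 * r) ell = ell := min_eq_right (by linarith)
      rw [hmin, hwell]
      have hcardL : (F.card : ℝ) * L ≤ (b0 - a0) / 2 + L := by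
        have heq : ((b0 - a0) / (2 * L) + 1) * L = (b0 - a0) / 2 + L := by
          field_simp
        calc (F.card : ℝ) * L ≤ ((b0 - a0) / (2 * L) + 1) * L :=
              mul_le_mul_of_nonneg_right hcard (le_of_lt hL)
        _ = (b0 - a0) / 2 + L := heq
      rcases le_or_gt r 1 with hr1 | hr1
      · have hrrα : r ≤ r ^ α := by
          calc r = r ^ (1:ℝ) := (Real.rpow_one r).symm
          _ ≤ r ^ α := Real.rpow_le_rpow_of_exponent_ge hr hr1 hα1
        have h1 : b0 - a0 ≤ 2 * r + ell := by
          rw [hb0, ha0]; linarith [min_le_left (x + r) 1, le_max_left (x - r - ell) (-2)]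
        have h2 : b0 - a0 ≤ 3 * r := by linarith
        calc (F.card : ℝ) * L ≤ (b0 - a0) / 2 + L := hcardL
        _ ≤ 3 * r / 2 + r := by linarith
        _ ≤ 5 * r ^ α := by linarith [hrα.le]
      · have h1α : (1:ℝ) ≤ r ^ α := by
          calc (1:ℝ) = 1 ^ α := (Real.one_rpow α).symm
          _ ≤ r ^ α := Real.rpow_le_rpow zero_le_one (le_of_lt hr1) (le_of_lt hα0)
        have h3 : b0 - a0 ≤ 3 := by
          rw [hb0, ha0]; linarith [min_le_right (x + r) 1, le_max_right (x - r - ell) (-2)]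
        calc (F.card : ℝ) * L ≤ (b0 - a0) / 2 + L := hcardL
        _ ≤ 3 / 2 + 1 := by linarith
        _ ≤ 5 * r ^ α := by linarith
  -- assemble
  rw [hμ]
  have step1 : ENNReal.ofReal w * volume (Metric.ball x r ∩ ⋃ j ∈ JJ α m N, Ij α m N j)
      ≤ ENNReal.ofReal w * ((F.card : ℝ≥0∞) * ENNReal.ofReal (min (2 * r) ell)) :=
    mul_le_mul_right hvol _
  have step2 : ENNReal.ofReal w * ((F.card : ℝ≥0∞) * ENNReal.ofReal (min (2 * r) ell))
      = ENNReal.ofReal ((F.card : ℝ) * (w * min (2 * r) ell)) := by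
    rw [← ENNReal.ofReal_natCast F.card, ← ENNReal.ofReal_mul (Nat.cast_nonneg _),
      ← ENNReal.ofReal_mul (le_of_lt hw)]
    congr 1
    ring
  exact le_trans step1 (le_trans (le_of_eq step2) (ENNReal.ofReal_le_ofReal hfin))

lemma S_subset (α m : ℝ) (hα0 : 0 < α) (hα1 : α ≤ 1) (hm0 : 0 < m) (hm1 : m < 1)
    (N : ℝ) (hN : 1 ≤ N) :
    (⋃ j ∈ JJ α m N, Ij α m N j) ⊆ Set.Icc (-2 : ℝ) 2 := by
  have hN0 : (0:ℝ) < N := lt_of_lt_of_le one_pos hN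
  set L : ℝ := N ^ (-(α * (1 - m))) with hLdef
  set ell : ℝ := N ^ (-(1 - m)) with helldef
  have hIj : ∀ j : ℤ, Ij α m N j = Set.Icc (2 * L * j) (2 * L * j + ell) := fun j => rfl
  have hell : 0 < ell := Real.rpow_pos_of_pos hN0 _
  have hell1 : ell ≤ 1 := Real.rpow_le_one_of_one_le_of_nonpos hN (by nlinarith)
  intro y hy
  simp only [mem_iUnion, exists_prop] at hy
  obtain ⟨j, hj, hyI⟩ := hy
  obtain ⟨z, hz1, hz2⟩ := hj
  rw [hIj j] at hyI hz1
  obtain ⟨hy1, hy2⟩ := hyI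
  obtain ⟨hz11, hz12⟩ := hz1
  obtain ⟨hz21, hz22⟩ := hz2
  constructor <;> [skip; skip] <;> linarith

/-- For `0 < α ≤ 1`, `m ∈ (0,1)` and `N ≥ 1`, the measure `μ` above
satisfies `μ(B(x,r)) ≲ r^α` for `x ∈ [-1,1]`, `r > 0`, uniformly in `N`; and after
multiplication by a suitable constant `c > 0` it is an `α`-dimensional probability measure
supported in (a fixed neighbourhood of) `[-1,1]`. -/
theorem statement16 (α m : ℝ) (hα0 : 0 < α) (hα1 : α ≤ 1) (hm0 : 0 < m) (hm1 : m < 1) :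
    (∃ C : ℝ, 0 < C ∧ ∀ N : ℝ, 1 ≤ N →
      ∀ x ∈ Set.Icc (-1 : ℝ) 1, ∀ r : ℝ, 0 < r →
        muN α m N (Metric.ball x r) ≤ ENNReal.ofReal (C * r ^ α)) ∧
    (∀ N : ℝ, 1 ≤ N →
      (∃ c : ℝ, 0 < c ∧ IsProbabilityMeasure (ENNReal.ofReal c • muN α m N)) ∧
        muN α m N (Set.Icc (-2 : ℝ) 2)ᶜ = 0) := by
  constructor
  · exact ⟨5, by norm_num, fun N hN x hx r hr => muN_ball_le α m hα0 hα1 hm0 hm1 N hN x hx r hr⟩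
  · intro N hN
    have hN0 : (0:ℝ) < N := lt_of_lt_of_le one_pos hN
    set L : ℝ := N ^ (-(α * (1 - m))) with hLdef
    set ell : ℝ := N ^ (-(1 - m)) with helldef
    set w : ℝ := N ^ ((1 - α) * (1 - m)) with hwdef
    have hIj : ∀ j : ℤ, Ij α m N j = Set.Icc (2 * L * j) (2 * L * j + ell) := fun j => rfl
    have hell : 0 < ell := Real.rpow_pos_of_pos hN0 _
    have hw : 0 < w := Real.rpow_pos_of_pos hN0 _
    have hSsub := S_subset α m hα0 hα1 hm0 hm1 N hN
    have hSmeas := Smeas α m N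
    have hμuniv : muN α m N Set.univ = ENNReal.ofReal w * volume (⋃ j ∈ JJ α m N, Ij α m N j) := by
      simp only [muN, Measure.smul_apply, Measure.restrict_apply_univ, smul_eq_mul, ← hwdef]
    have h0J : (0 : ℤ) ∈ JJ α m N := by
      refine ⟨0, ?_, by constructor <;> norm_num⟩
      rw [hIj 0]
      constructor <;> simp [le_of_lt hell]
    have hlow : ENNReal.ofReal ell ≤ volume (⋃ j ∈ JJ α m N, Ij α m N j) := by
      have hsub0 : Ij α m N 0 ⊆ ⋃ j ∈ JJ α m N, Ij α m N j := by
        intro y hy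
        simp only [mem_iUnion, exists_prop]
        exact ⟨0, h0J, hy⟩
      calc ENNReal.ofReal ell = volume (Ij α m N 0) := by
            rw [hIj 0, Real.volume_Icc]; congr 1; ring
      _ ≤ _ := measure_mono hsub0
    have hup : volume (⋃ j ∈ JJ α m N, Ij α m N j) ≤ ENNReal.ofReal 4 := by
      calc volume (⋃ j ∈ JJ α m N, Ij α m N j) ≤ volume (Set.Icc (-2:ℝ) 2) :=
            measure_mono hSsub
      _ = ENNReal.ofReal 4 := by rw [Real.volume_Icc]; norm_num
    have hT0 : muN α m N Set.univ ≠ 0 := by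
      rw [hμuniv]
      apply ne_of_gt
      apply ENNReal.mul_pos
      · exact ne_of_gt (ENNReal.ofReal_pos.mpr hw)
      · exact ne_of_gt (lt_of_lt_of_le (ENNReal.ofReal_pos.mpr hell) hlow)
    have hTtop : muN α m N Set.univ ≠ ⊤ := by
      rw [hμuniv]
      exact ENNReal.mul_ne_top ENNReal.ofReal_ne_top
        (ne_of_lt (lt_of_le_of_lt hup ENNReal.ofReal_lt_top))
    constructor
    · refine ⟨(muN α m N Set.univ).toReal⁻¹, ?_, ?_⟩
      · exact inv_pos.mpr (ENNReal.toReal_pos hT0 hTtop)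
      · constructor
        rw [Measure.smul_apply, smul_eq_mul,
          ENNReal.ofReal_inv_of_pos (ENNReal.toReal_pos hT0 hTtop),
          ENNReal.ofReal_toReal hTtop, ENNReal.inv_mul_cancel hT0 hTtop]
    · have : muN α m N (Set.Icc (-2 : ℝ) 2)ᶜ =
          ENNReal.ofReal w * volume ((Set.Icc (-2:ℝ) 2)ᶜ ∩ ⋃ j ∈ JJ α m N, Ij α m N j) := by
        simp only [muN, Measure.smul_apply, Measure.restrict_apply measurableSet_Icc.compl,
          smul_eq_mul, ← hwdef]
      rw [this]
      have hempty : (Set.Icc (-2:ℝ) 2)ᶜ ∩ (⋃ j ∈ JJ α m N, Ij α m N j) = ∅ := by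
        apply Set.eq_empty_of_forall_notMem
        rintro y ⟨hy1, hy2⟩
        exact hy1 (hSsub hy2)
      rw [hempty, measure_empty, mul_zero]
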